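/- Let [n] = I ∪ J be a partition into disjoint sets and W ⊆ ℝⁿ a linear subspace. Then ℓ_I^W is minus the adjoint of ℓ_J^{W⊥}: for all x ∈ ℝ^I and y ∈ ℝ^J, ⟨ℓ_I^W(x), y⟩ = −⟨x, ℓ_J^{W⊥}(y)⟩. In particular, ℓ_I^W and ℓ_J^{W⊥} have the same nonzero singular values. -/

import Mathlib

/-!
Write `u = L_I^W x ∈ W` and `v = L_J^{W⊥} y ∈ W⊥`. Minimality of `u` makes it orthogonal to
every vector of `W` vanishing on `I`; the vector equal to `v_J - y` on `J` and to `0` on `I` is one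
(because `v_J - y ⊥ π_J(W⊥)`), so `⟨u_J, y⟩ = ⟨u_J, v_J⟩`, and symmetrically
`⟨v_I, x⟩ = ⟨v_I, u_I⟩`. As `⟨u, v⟩ = ⟨u_I, v_I⟩ + ⟨u_J, v_J⟩ = 0`, this gives the adjoint
identity `ℓ_J^{W⊥} = -(ℓ_I^W)*`. The nonzero singular values of `M` and `-M*` agree because
`M*M` and `MM*` have the same nonzero eigenvalues; the Courant–Fischer singular values are matched
with the square roots of the eigenvalues of `M*M` by testing on spans of eigenvectors.
-/

open scoped RealInnerProductSpace

/-- The coordinate projection `π_I : ℝⁿ → ℝ^I` as a linear map. -/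
noncomputable def coordRestrict {n : ℕ} (I : Finset (Fin n)) :
    EuclideanSpace ℝ (Fin n) →ₗ[ℝ] EuclideanSpace ℝ {i : Fin n // i ∈ I} where
  toFun x := WithLp.toLp 2 (fun i : {i : Fin n // i ∈ I} => x i.1)
  map_add' _ _ := rfl
  map_smul' _ _ := rfl

/-- `L` is the lifting map `L_I^W : ℝ^I → W`: for every `x`, `L x` is the minimum-norm
element of `{w ∈ W : w_I = Π_{π_I(W)}(x)}` (equivalently, of
`{w ∈ W : w_I - x ∈ (π_I(W))ᗮ}`). -/
def IsLiftingMap {n : ℕ} (I : Finset (Fin n)) (W : Submodule ℝ (EuclideanSpace ℝ (Fin n)))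
    (L : EuclideanSpace ℝ {i : Fin n // i ∈ I} →ₗ[ℝ] EuclideanSpace ℝ (Fin n)) : Prop :=
  ∀ x, (L x ∈ W ∧ coordRestrict I (L x) - x ∈ (W.map (coordRestrict I))ᗮ) ∧
    ∀ w ∈ W, coordRestrict I w - x ∈ (W.map (coordRestrict I))ᗮ → ‖L x‖ ≤ ‖w‖

/-- The `k`-th largest singular value of a linear map between finite-dimensional
normed spaces, via the Courant–Fischer characterization, with the convention that
it is `0` when `k` exceeds the dimension of the domain. -/
noncomputable def singularValue {E F : Type*} [NormedAddCommGroup E] [NormedAddCommGroup F]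
    [Module ℝ E] [Module ℝ F] (M : E →ₗ[ℝ] F) (k : ℕ) : ℝ :=
  if k ≤ Module.finrank ℝ E then
    sInf {t : ℝ | ∃ S : Submodule ℝ E,
      Module.finrank ℝ S = Module.finrank ℝ E - k + 1 ∧
      t = sSup {r : ℝ | ∃ u ∈ S, u ≠ 0 ∧ r = ‖M u‖ / ‖u‖}}
  else 0

lemma inner_eq_zero_of_forall_norm_le_norm_add_smul {H : Type*} [NormedAddCommGroup H]
    [InnerProductSpace ℝ H] {u d : H} (h : ∀ t : ℝ, ‖u‖ ≤ ‖u + t • d‖) : ⟪u, d⟫ = 0 := by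
  have key : ∀ t : ℝ, 0 ≤ t * (2 * ⟪u, d⟫ + t * ‖d‖ ^ 2) := fun t => by
    have := pow_le_pow_left₀ (norm_nonneg _) (h t) 2
    rw [norm_add_sq_real, real_inner_smul_right, norm_smul, mul_pow, Real.norm_eq_abs,
      sq_abs] at this
    linarith
  -- test `t = -⟪u, d⟫ / (‖d‖² + 1)`; the `+ 1` spares a case split on `d = 0`
  set a := ⟪u, d⟫
  set c := (‖d‖ ^ 2 + 1)⁻¹
  have hcd : c * ‖d‖ ^ 2 = 1 - c := by
    simp only [c]; field_simp; ring
  have hval : -a * c * (2 * a + -a * c * ‖d‖ ^ 2) = -(a ^ 2 * (c * (1 + c))) := by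
    linear_combination (a ^ 2 * c) * hcd
  have := key (-a * c)
  rw [hval, neg_nonneg] at this
  exact pow_eq_zero_iff two_ne_zero |>.mp <|
    le_antisymm (nonpos_of_mul_nonpos_left this (by positivity)) (sq_nonneg a)

section Coordinates

variable {n : ℕ}

noncomputable def coordExtend (I : Finset (Fin n)) :
    EuclideanSpace ℝ {i : Fin n // i ∈ I} →ₗ[ℝ] EuclideanSpace ℝ (Fin n) where
  toFun z := WithLp.toLp 2 (fun i => if h : i ∈ I then z ⟨i, h⟩ else 0)
  map_add' a b := by ext i; by_cases h : i ∈ I <;> simp [h]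
  map_smul' c a := by ext i; by_cases h : i ∈ I <;> simp [h]

@[simp]
lemma coordRestrict_apply (I : Finset (Fin n)) (a : EuclideanSpace ℝ (Fin n))
    (i : {i : Fin n // i ∈ I}) : coordRestrict I a i = a i := rfl

@[simp]
lemma coordRestrict_coordExtend (I : Finset (Fin n)) (z : EuclideanSpace ℝ {i : Fin n // i ∈ I}) :
    coordRestrict I (coordExtend I z) = z := by
  ext i
  simp [coordExtend, i.2]

lemma coordRestrict_coordExtend_of_disjoint {I J : Finset (Fin n)} (hdisj : Disjoint I J)
    (z : EuclideanSpace ℝ {i : Fin n // i ∈ I}) : coordRestrict J (coordExtend I z) = 0 := by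
  ext j
  simp [coordExtend, Finset.disjoint_right.mp hdisj j.2]

lemma inner_eq_inner_coordRestrict_add {I J : Finset (Fin n)} (hIJ : I ∪ J = Finset.univ)
    (hdisj : Disjoint I J) (a b : EuclideanSpace ℝ (Fin n)) :
    ⟪a, b⟫ = ⟪coordRestrict I a, coordRestrict I b⟫ + ⟪coordRestrict J a, coordRestrict J b⟫ := by
  simp only [PiLp.inner_apply, coordRestrict_apply]
  rw [Finset.sum_coe_sort I (fun i => ⟪a i, b i⟫), Finset.sum_coe_sort J (fun i => ⟪a i, b i⟫),
    ← Finset.sum_union hdisj, hIJ]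

lemma inner_coordExtend_right (I : Finset (Fin n)) (a : EuclideanSpace ℝ (Fin n))
    (z : EuclideanSpace ℝ {i : Fin n // i ∈ I}) :
    ⟪a, coordExtend I z⟫ = ⟪coordRestrict I a, z⟫ := by
  rw [inner_eq_inner_coordRestrict_add (Finset.union_compl I) disjoint_compl_right,
    coordRestrict_coordExtend, coordRestrict_coordExtend_of_disjoint disjoint_compl_right,
    inner_zero_right, add_zero]

lemma coordExtend_mem_orthogonal {I : Finset (Fin n)} {K : Submodule ℝ (EuclideanSpace ℝ (Fin n))}
    {z : EuclideanSpace ℝ {i : Fin n // i ∈ I}} (hz : z ∈ (K.map (coordRestrict I))ᗮ) :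
    coordExtend I z ∈ Kᗮ := fun p hp => by
  rw [inner_coordExtend_right]
  exact hz _ ⟨p, hp, rfl⟩

end Coordinates

namespace IsLiftingMap

variable {n : ℕ} {I J : Finset (Fin n)} {W : Submodule ℝ (EuclideanSpace ℝ (Fin n))}
  {L : EuclideanSpace ℝ {i : Fin n // i ∈ I} →ₗ[ℝ] EuclideanSpace ℝ (Fin n)}

lemma inner_eq_zero (hL : IsLiftingMap I W L) (x : EuclideanSpace ℝ {i : Fin n // i ∈ I})
    {d : EuclideanSpace ℝ (Fin n)} (hd : d ∈ W) (hdI : coordRestrict I d = 0) :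
    ⟪L x, d⟫ = 0 := by
  obtain ⟨⟨hLx, hLxI⟩, hmin⟩ := hL x
  refine inner_eq_zero_of_forall_norm_le_norm_add_smul fun t => hmin _ ?_ ?_
  · exact W.add_mem hLx (W.smul_mem t hd)
  · simpa [hdI] using hLxI

lemma inner_coordRestrict_eq_zero (hdisj : Disjoint I J) (hL : IsLiftingMap I W L)
    (x : EuclideanSpace ℝ {i : Fin n // i ∈ I}) {z : EuclideanSpace ℝ {j : Fin n // j ∈ J}}
    (hz : z ∈ (Wᗮ.map (coordRestrict J))ᗮ) :
    ⟪coordRestrict J (L x), z⟫ = 0 := by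
  have hzW : coordExtend J z ∈ W := W.orthogonal_orthogonal ▸ coordExtend_mem_orthogonal hz
  rw [← inner_coordExtend_right, hL.inner_eq_zero x hzW
    (coordRestrict_coordExtend_of_disjoint hdisj.symm z)]

end IsLiftingMap

theorem inner_coordRestrict_lift_eq_neg {n : ℕ} {I J : Finset (Fin n)}
    (hIJ : I ∪ J = Finset.univ) (hdisj : Disjoint I J)
    {W : Submodule ℝ (EuclideanSpace ℝ (Fin n))}
    {L : EuclideanSpace ℝ {i : Fin n // i ∈ I} →ₗ[ℝ] EuclideanSpace ℝ (Fin n)}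
    {L' : EuclideanSpace ℝ {j : Fin n // j ∈ J} →ₗ[ℝ] EuclideanSpace ℝ (Fin n)}
    (hL : IsLiftingMap I W L) (hL' : IsLiftingMap J Wᗮ L')
    (x : EuclideanSpace ℝ {i : Fin n // i ∈ I}) (y : EuclideanSpace ℝ {j : Fin n // j ∈ J}) :
    ⟪coordRestrict J (L x), y⟫ = -⟪x, coordRestrict I (L' y)⟫ := by
  have hJ : ⟪coordRestrict J (L x), coordRestrict J (L' y) - y⟫ = 0 :=
    hL.inner_coordRestrict_eq_zero hdisj x (hL' y).1.2
  have hI : ⟪coordRestrict I (L' y), coordRestrict I (L x) - x⟫ = 0 :=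
    hL'.inner_coordRestrict_eq_zero hdisj.symm y (W.orthogonal_orthogonal.symm ▸ (hL x).1.2)
  have hLL' : ⟪L x, L' y⟫ = 0 := (hL' y).1.1 _ (hL x).1.1
  rw [inner_eq_inner_coordRestrict_add hIJ hdisj] at hLL'
  rw [inner_sub_right] at hJ hI
  linarith [real_inner_comm x (coordRestrict I (L' y)),
    real_inner_comm (coordRestrict I (L x)) (coordRestrict I (L' y))]

lemma Submodule.exists_mem_inf_ne_zero_of_finrank_lt_add {K V : Type*} [DivisionRing K]
    [AddCommGroup V] [Module K V] [FiniteDimensional K V] {S U : Submodule K V}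
    (h : Module.finrank K V < Module.finrank K S + Module.finrank K U) :
    ∃ u ∈ S, u ∈ U ∧ u ≠ 0 := by
  by_contra! hSU
  exact h.not_ge (Submodule.finrank_add_finrank_le_of_disjoint
    (Submodule.disjoint_def.mpr hSU))

lemma OrthonormalBasis.inner_eq_zero_of_mem_span_image {ι E : Type*} [Fintype ι]
    [NormedAddCommGroup E] [InnerProductSpace ℝ E] (e : OrthonormalBasis ι ℝ E) {s : Set ι}
    {u : E} (hu : u ∈ Submodule.span ℝ (e '' s)) {i : ι} (hi : i ∉ s) : ⟪e i, u⟫ = 0 := by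
  obtain ⟨l, hl, rfl⟩ := (Finsupp.mem_span_image_iff_linearCombination ℝ).mp hu
  rw [real_inner_comm]
  exact e.orthonormal.inner_finsupp_eq_zero hi hl

lemma OrthonormalBasis.finrank_span_image {ι E : Type*} [Fintype ι]
    [NormedAddCommGroup E] [InnerProductSpace ℝ E] (e : OrthonormalBasis ι ℝ E) (s : Finset ι) :
    Module.finrank ℝ (Submodule.span ℝ (e '' s)) = s.card := by
  rw [Set.image_eq_range]
  exact (finrank_span_eq_card (e.orthonormal.linearIndependent.comp _ Subtype.val_injective)).trans
    (by simp)

lemma Module.End.HasEigenvalue.comp_swap {K V W : Type*} [Field K] [AddCommGroup V]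
    [Module K V] [AddCommGroup W] [Module K W] {A : V →ₗ[K] W} {B : W →ₗ[K] V} {μ : K}
    (h : Module.End.HasEigenvalue (B ∘ₗ A) μ) (hμ : μ ≠ 0) :
    Module.End.HasEigenvalue (A ∘ₗ B) μ := by
  obtain ⟨v, hv, hv0⟩ := h.exists_hasEigenvector
  rw [Module.End.mem_eigenspace_iff, LinearMap.comp_apply] at hv
  refine Module.End.hasEigenvalue_of_hasEigenvector (x := A v) ⟨?_, fun hAv => ?_⟩
  · rw [Module.End.mem_eigenspace_iff, LinearMap.comp_apply, hv, map_smul]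
  · rw [hAv, map_zero, eq_comm, smul_eq_zero] at hv
    exact hv.elim hμ hv0

section CourantFischer

variable {E F : Type*} [NormedAddCommGroup E] [NormedSpace ℝ E] [FiniteDimensional ℝ E]
  [NormedAddCommGroup F] [NormedSpace ℝ F]

/-- Courant–Fischer: `S` attains the infimum, and `U` meets every competing subspace. -/
lemma singularValue_eq_of_bounds (M : E →ₗ[ℝ] F) {k : ℕ} (hk : k ≤ Module.finrank ℝ E) {s : ℝ}
    {S U : Submodule ℝ E} (hS : Module.finrank ℝ S = Module.finrank ℝ E - k + 1)
    (hU : Module.finrank ℝ U = k) (hSle : ∀ u ∈ S, ‖M u‖ ≤ s * ‖u‖)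
    (hUge : ∀ u ∈ U, s * ‖u‖ ≤ ‖M u‖) :
    singularValue M k = s := by
  set R : Submodule ℝ E → Set ℝ := fun S => {r : ℝ | ∃ u ∈ S, u ≠ 0 ∧ r = ‖M u‖ / ‖u‖}
  have hbdd : ∀ S, BddAbove (R S) := fun S => ⟨‖LinearMap.toContinuousLinearMap M‖, by
    rintro _ ⟨u, -, -, rfl⟩
    exact div_le_of_le_mul₀ (norm_nonneg _) (norm_nonneg _)
      ((LinearMap.toContinuousLinearMap M).le_opNorm u)⟩
  have hge : ∀ S' : Submodule ℝ E, Module.finrank ℝ S' = Module.finrank ℝ E - k + 1 →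
      ∃ u ∈ S', u ≠ 0 ∧ s ≤ ‖M u‖ / ‖u‖ := fun S' hS' => by
    obtain ⟨u, huS, huU, hu⟩ :=
      Submodule.exists_mem_inf_ne_zero_of_finrank_lt_add (S := S') (U := U) (by omega)
    exact ⟨u, huS, hu, (le_div_iff₀ (norm_pos_iff.mpr hu)).mpr (hUge u huU)⟩
  have hSup : sSup (R S) = s := by
    obtain ⟨u, huS, hu, hsu⟩ := hge S hS
    refine le_antisymm (csSup_le ⟨_, u, huS, hu, rfl⟩ ?_)
      (hsu.trans (le_csSup (hbdd S) ⟨u, huS, hu, rfl⟩))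
    rintro _ ⟨v, hvS, hv, rfl⟩
    exact (div_le_iff₀ (norm_pos_iff.mpr hv)).mpr (hSle v hvS)
  rw [singularValue, if_pos hk]
  refine IsLeast.csInf_eq ⟨⟨S, hS, hSup.symm⟩, ?_⟩
  rintro _ ⟨S', hS', rfl⟩
  obtain ⟨u, huS, hu, hsu⟩ := hge S' hS'
  exact hsu.trans (le_csSup (hbdd S') ⟨u, huS, hu, rfl⟩)

end CourantFischer

section SingularValues

variable {E F : Type*} [NormedAddCommGroup E] [InnerProductSpace ℝ E] [FiniteDimensional ℝ E]
  [NormedAddCommGroup F] [InnerProductSpace ℝ F] [FiniteDimensional ℝ F]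
  (M : E →ₗ[ℝ] F) {d : ℕ} (hd : Module.finrank ℝ E = d)

include hd in
lemma norm_apply_sq_eq_sum_eigenvalues (u : E) :
    ‖M u‖ ^ 2 = ∑ j, M.isSymmetric_adjoint_comp_self.eigenvalues hd j *
      ⟪M.isSymmetric_adjoint_comp_self.eigenvectorBasis hd j, u⟫ ^ 2 := by
  set e := M.isSymmetric_adjoint_comp_self.eigenvectorBasis hd
  rw [← real_inner_self_eq_norm_sq, ← LinearMap.adjoint_inner_right, ← e.sum_inner_mul_inner]
  refine Finset.sum_congr rfl fun j _ => ?_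
  rw [← LinearMap.comp_apply, ← M.isSymmetric_adjoint_comp_self,
    LinearMap.IsSymmetric.apply_eigenvectorBasis, RCLike.ofReal_real_eq_id, id_eq,
    real_inner_smul_left, real_inner_comm u]
  ring

include hd in
lemma norm_apply_sq_le_of_mem_span {s : Set (Fin d)} {c : ℝ}
    (hc : ∀ j ∈ s, M.isSymmetric_adjoint_comp_self.eigenvalues hd j ≤ c) {u : E}
    (hu : u ∈ Submodule.span ℝ (M.isSymmetric_adjoint_comp_self.eigenvectorBasis hd '' s)) :
    ‖M u‖ ^ 2 ≤ c * ‖u‖ ^ 2 := by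
  rw [norm_apply_sq_eq_sum_eigenvalues M hd,
    ← (M.isSymmetric_adjoint_comp_self.eigenvectorBasis hd).sum_sq_inner_right, Finset.mul_sum]
  refine Finset.sum_le_sum fun j _ => ?_
  by_cases hj : j ∈ s
  · exact mul_le_mul_of_nonneg_right (hc j hj) (sq_nonneg _)
  · simp [OrthonormalBasis.inner_eq_zero_of_mem_span_image _ hu hj]

include hd in
lemma le_norm_apply_sq_of_mem_span {s : Set (Fin d)} {c : ℝ}
    (hc : ∀ j ∈ s, c ≤ M.isSymmetric_adjoint_comp_self.eigenvalues hd j) {u : E}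
    (hu : u ∈ Submodule.span ℝ (M.isSymmetric_adjoint_comp_self.eigenvectorBasis hd '' s)) :
    c * ‖u‖ ^ 2 ≤ ‖M u‖ ^ 2 := by
  rw [norm_apply_sq_eq_sum_eigenvalues M hd,
    ← (M.isSymmetric_adjoint_comp_self.eigenvectorBasis hd).sum_sq_inner_right, Finset.mul_sum]
  refine Finset.sum_le_sum fun j _ => ?_
  by_cases hj : j ∈ s
  · exact mul_le_mul_of_nonneg_right (hc j hj) (sq_nonneg _)
  · simp [OrthonormalBasis.inner_eq_zero_of_mem_span_image _ hu hj]

/-- The Courant–Fischer `singularValue`, indexed from `1`, agrees with Mathlib's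
`LinearMap.singularValues`, indexed from `0`. -/
theorem singularValue_eq_singularValues {k : ℕ} (hk : 1 ≤ k) :
    singularValue M k = M.singularValues (k - 1) := by
  by_cases hkE : k ≤ Module.finrank ℝ E
  swap
  · rw [singularValue, if_neg hkE, M.singularValues_of_finrank_le (by omega)]
  set d := Module.finrank ℝ E
  have hT := M.isSymmetric_adjoint_comp_self
  set ν := hT.eigenvalues rfl
  set e := hT.eigenvectorBasis rfl
  set k' : Fin d := ⟨k - 1, by omega⟩
  have hk' : (k' : ℕ) = k - 1 := rfl
  have hν : 0 ≤ ν k' := M.isPositive_adjoint_comp_self.nonneg_eigenvalues rfl k'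
  have hsqrt : ∀ u : E, √(ν k') * ‖u‖ = √(ν k' * ‖u‖ ^ 2) := fun u => by
    rw [Real.sqrt_mul hν, Real.sqrt_sq (norm_nonneg u)]
  rw [M.singularValues_of_lt rfl (by omega)]
  refine singularValue_eq_of_bounds M hkE (S := Submodule.span ℝ (e '' ↑(Finset.Ici k')))
    (U := Submodule.span ℝ (e '' ↑(Finset.Iic k'))) ?_ ?_ (fun u hu => ?_) (fun u hu => ?_)
  · rw [e.finrank_span_image, Fin.card_Ici]
    omega
  · rw [e.finrank_span_image, Fin.card_Iic]
    omega
  · rw [hsqrt]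
    exact Real.le_sqrt_of_sq_le <| norm_apply_sq_le_of_mem_span M rfl
      (fun j hj => hT.eigenvalues_antitone rfl (Finset.mem_Ici.mp hj)) hu
  · rw [hsqrt, Real.sqrt_le_left (norm_nonneg _)]
    exact le_norm_apply_sq_of_mem_span M rfl
      (fun j hj => hT.eigenvalues_antitone rfl (Finset.mem_Iic.mp hj)) hu

def nonzeroSingularValues (M : E →ₗ[ℝ] F) : Set ℝ :=
  {r : ℝ | r ≠ 0 ∧ ∃ k : ℕ, 1 ≤ k ∧ singularValue M k = r}

lemma nonzeroSingularValues_eq :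
    nonzeroSingularValues M =
      {r : ℝ | 0 < r ∧ Module.End.HasEigenvalue (LinearMap.adjoint M ∘ₗ M) (r ^ 2)} := by
  ext r
  constructor
  · rintro ⟨hr, k, hk, rfl⟩
    rw [singularValue_eq_singularValues M hk] at hr ⊢
    have hkE : k - 1 < Module.finrank ℝ E := by
      by_contra! hkE
      exact hr (M.singularValues_of_finrank_le hkE)
    exact ⟨(M.singularValues_pos_iff_ne_zero _).mpr hr,
      M.hasEigenvalue_adjoint_comp_self_sq_singularValues hkE⟩
  · rintro ⟨hr, hμ⟩
    obtain ⟨i, hi⟩ := M.isSymmetric_adjoint_comp_self.exists_eigenvalues_eq rfl hμ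
    rw [RCLike.ofReal_real_eq_id, id_eq] at hi
    refine ⟨hr.ne', i + 1, by omega, ?_⟩
    rw [singularValue_eq_singularValues M (by omega), Nat.add_sub_cancel,
      M.singularValues_fin rfl, hi, Real.sqrt_sq hr.le]

lemma nonzeroSingularValues_neg (M : E →ₗ[ℝ] F) :
    nonzeroSingularValues (-M) = nonzeroSingularValues M := by
  simp only [nonzeroSingularValues_eq, map_neg, LinearMap.neg_comp, LinearMap.comp_neg, neg_neg]

lemma nonzeroSingularValues_adjoint (M : E →ₗ[ℝ] F) :
    nonzeroSingularValues (LinearMap.adjoint M) = nonzeroSingularValues M := by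
  simp only [nonzeroSingularValues_eq, LinearMap.adjoint_adjoint]
  ext r
  exact and_congr_right fun hr =>
    ⟨fun h => h.comp_swap (by positivity), fun h => h.comp_swap (by positivity)⟩

lemma nonzeroSingularValues_eq_of_inner_eq_neg {M : E →ₗ[ℝ] F} {M' : F →ₗ[ℝ] E}
    (h : ∀ x y, ⟪M x, y⟫ = -⟪x, M' y⟫) :
    nonzeroSingularValues M' = nonzeroSingularValues M := by
  have hM' : -M' = LinearMap.adjoint M :=
    (LinearMap.eq_adjoint_iff _ _).mpr fun y x => by
      rw [LinearMap.neg_apply, inner_neg_left, real_inner_comm, ← h, real_inner_comm]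
  rw [← nonzeroSingularValues_adjoint M, ← hM', nonzeroSingularValues_neg]

end SingularValues

theorem statement7 (n : ℕ) (I J : Finset (Fin n))
    (hIJ : I ∪ J = Finset.univ) (hdisj : Disjoint I J)
    (W : Submodule ℝ (EuclideanSpace ℝ (Fin n)))
    (L : EuclideanSpace ℝ {i : Fin n // i ∈ I} →ₗ[ℝ] EuclideanSpace ℝ (Fin n))
    (L' : EuclideanSpace ℝ {j : Fin n // j ∈ J} →ₗ[ℝ] EuclideanSpace ℝ (Fin n))
    (hL : IsLiftingMap I W L) (hL' : IsLiftingMap J Wᗮ L') :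
    (∀ x y, ⟪(coordRestrict J).comp L x, y⟫ = -⟪x, (coordRestrict I).comp L' y⟫) ∧
    {r : ℝ | r ≠ 0 ∧ ∃ k : ℕ, 1 ≤ k ∧ singularValue ((coordRestrict J).comp L) k = r} =
      {r : ℝ | r ≠ 0 ∧ ∃ k : ℕ, 1 ≤ k ∧ singularValue ((coordRestrict I).comp L') k = r} := by
  have hadj : ∀ x y, ⟪(coordRestrict J).comp L x, y⟫ = -⟪x, (coordRestrict I).comp L' y⟫ :=
    inner_coordRestrict_lift_eq_neg hIJ hdisj hL hL'
  exact ⟨hadj, (nonzeroSingularValues_eq_of_inner_eq_neg hadj).symm⟩
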